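/- For all integers n, k ≥ 1, C(n−1, k−1)² = ∑_{r≥1} ∑ f(m_1,k_1) f(m_2,k_2) ⋯ f(m_r,k_r), where the inner sum ranges over all r-tuples of positive integers (m_1,…,m_r) with m_1+⋯+m_r = n and (k_1,…,k_r) with k_1+⋯+k_r = k (the sum over r is finite since necessarily r ≤ k). -/

import Mathlib

/-- `b : Fin k → ℕ` is a composition of `n` into `k` (positive) parts. -/
def IsComposition (n k : ℕ) (b : Fin k → ℕ) : Prop :=
  (∀ i, 0 < b i) ∧ ∑ i, b i = n

/-- An ordered pair of compositions of `n` into `k` parts is irreducible if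
their partial sums disagree at every index `j = 1, …, k-1`. -/
def IsIrreduciblePair (n k : ℕ) (b b' : Fin k → ℕ) : Prop :=
  IsComposition n k b ∧ IsComposition n k b' ∧
    ∀ j : ℕ, 1 ≤ j → j < k →
      ∑ i ∈ Finset.univ.filter (fun i : Fin k => (i : ℕ) < j), b i ≠
        ∑ i ∈ Finset.univ.filter (fun i : Fin k => (i : ℕ) < j), b' i

/-- `f n k` is the number of irreducible ordered pairs of compositions of `n`
into `k` parts. -/
noncomputable def numIrreduciblePairsK (n k : ℕ) : ℕ :=
  Nat.card {p : (Fin k → ℕ) × (Fin k → ℕ) // IsIrreduciblePair n k p.1 p.2}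

/-!
Cutting a pair of compositions at the first index `j ≥ 1` where their partial sums agree
(say with common value `m`) splits it into an irreducible pair of compositions of `m` into `j`
parts, followed by an arbitrary pair of compositions of `n - m` into `k - j` parts. Hence the
number `P(n, k) = C(n-1, k-1)²` of pairs satisfies the renewal equation `P = δ + f ⋆ P` on `ℕ × ℕ`,
whose solution is `∑ᵣ f^{⋆r}`; the `r`-th convolution power is the inner sum of the theorem.
-/

open Finset

def compositions (n k : ℕ) : Finset (Fin k → ℕ) :=
  (Fintype.piFinset fun _ => Icc 1 n).filter fun b => ∑ i, b i = n

lemma mem_compositions {n k : ℕ} {b : Fin k → ℕ} :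
    b ∈ compositions n k ↔ IsComposition n k b := by
  simp only [compositions, IsComposition, mem_filter, Fintype.mem_piFinset, mem_Icc]
  refine ⟨fun h => ⟨fun i => (h.1 i).1, h.2⟩, fun h => ⟨fun i => ⟨h.1 i, ?_⟩, h.2⟩⟩
  exact h.2 ▸ single_le_sum (fun _ _ => Nat.zero_le _) (mem_univ i)

lemma IsComposition.length_le {n k : ℕ} {b : Fin k → ℕ} (hb : IsComposition n k b) : k ≤ n := by
  simpa [← hb.2] using card_nsmul_le_sum univ b 1 fun i _ => hb.1 i

def compositionsEquivSumEq (n k : ℕ) (hkn : k ≤ n) :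
    compositions n k ≃ {P : Fin k → ℕ // ∑ i, P i = n - k} where
  toFun b := ⟨fun i => b.1 i - 1, by
    have hb := mem_compositions.1 b.2
    rw [sum_tsub_distrib _ fun i _ => hb.1 i]
    simp [hb.2]⟩
  invFun P := ⟨fun i => P.1 i + 1, by
    rw [mem_compositions]
    refine ⟨fun i => Nat.succ_pos _, ?_⟩
    simp [sum_add_distrib, P.2, hkn]⟩
  left_inv b := Subtype.ext <| funext fun i => Nat.sub_add_cancel ((mem_compositions.1 b.2).1 i)
  right_inv P := by simp

theorem card_compositions {n k : ℕ} (hn : 1 ≤ n) (hk : 1 ≤ k) :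
    #(compositions n k) = (n - 1).choose (k - 1) := by
  rcases le_or_gt k n with hkn | hnk
  · rw [card_eq_of_equiv_fintype ((compositionsEquivSumEq n k hkn).trans
      (Sym.equivNatSumOfFintype (Fin k) (n - k)).symm), Sym.card_sym_eq_choose, Fintype.card_fin,
      show k + (n - k) - 1 = n - 1 by omega,
      Nat.choose_symm_of_eq_add (by omega : n - 1 = (n - k) + (k - 1))]
  · rw [Nat.choose_eq_zero_of_lt (by omega), card_eq_zero, eq_empty_iff_forall_notMem]
    exact fun b hb => (mem_compositions.1 hb).length_le.not_gt hnk

def pairCompositions (r n k : ℕ) : Finset (Fin r → ℕ × ℕ) :=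
  (Fintype.piFinset fun _ : Fin r => Icc 1 n ×ˢ Icc 1 k).filter
    (fun c => (∑ i, (c i).1) = n ∧ (∑ i, (c i).2) = k)

lemma mem_pairCompositions {r n k : ℕ} {c : Fin r → ℕ × ℕ} :
    c ∈ pairCompositions r n k ↔
      (∀ i, 1 ≤ (c i).1 ∧ 1 ≤ (c i).2) ∧ (∑ i, (c i).1) = n ∧ (∑ i, (c i).2) = k := by
  simp only [pairCompositions, mem_filter, Fintype.mem_piFinset, mem_product, mem_Icc]
  refine ⟨fun h => ⟨fun i => ⟨(h.1 i).1.1, (h.1 i).2.1⟩, h.2⟩,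
    fun h => ⟨fun i => ⟨⟨(h.1 i).1, ?_⟩, (h.1 i).2, ?_⟩, h.2⟩⟩
  · exact h.2.1 ▸ single_le_sum (f := fun i => (c i).1) (fun _ _ => Nat.zero_le _) (mem_univ i)
  · exact h.2.2 ▸ single_le_sum (f := fun i => (c i).2) (fun _ _ => Nat.zero_le _) (mem_univ i)

section WeightedSum

variable {R : Type*} [CommSemiring R] (F : ℕ × ℕ → R)

lemma sum_pairCompositions_zero (n k : ℕ) :
    ∑ c ∈ pairCompositions 0 n k, ∏ i, F (c i) = if n = 0 ∧ k = 0 then 1 else 0 := by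
  split_ifs with h
  · obtain ⟨rfl, rfl⟩ := h
    simp [pairCompositions]
  · simp [pairCompositions, show ¬(0 = n ∧ 0 = k) by omega]

lemma sum_pairCompositions_succ (r n k : ℕ) :
    ∑ c ∈ pairCompositions (r + 1) n k, ∏ i, F (c i) =
      ∑ x ∈ Icc 1 n ×ˢ Icc 1 k,
        F x * ∑ c ∈ pairCompositions r (n - x.1) (k - x.2), ∏ i, F (c i) := by
  simp_rw [mul_sum]
  rw [sum_sigma']
  refine sum_bij' (fun c _ => ⟨c 0, Fin.tail c⟩) (fun xc _ => Fin.cons xc.1 xc.2)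
    ?_ ?_ (fun c _ => Fin.cons_self_tail c) (fun xc _ => by simp) (fun c _ => Fin.prod_univ_succ _)
  · intro c hc
    rw [mem_pairCompositions, Fin.forall_fin_succ, Fin.sum_univ_succ, Fin.sum_univ_succ] at hc
    simp only [mem_sigma, mem_product, mem_Icc, mem_pairCompositions, Fin.tail]
    obtain ⟨⟨h0, hpos⟩, hn, hk⟩ := hc
    exact ⟨⟨⟨h0.1, by omega⟩, h0.2, by omega⟩, hpos, by omega, by omega⟩
  · rintro ⟨x, c⟩ hxc
    simp only [mem_sigma, mem_product, mem_Icc, mem_pairCompositions] at hxc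
    rw [mem_pairCompositions, Fin.forall_fin_succ, Fin.sum_univ_succ, Fin.sum_univ_succ]
    simp only [Fin.cons_zero, Fin.cons_succ]
    obtain ⟨⟨⟨h1, hn⟩, h2, hk⟩, hpos, hsn, hsk⟩ := hxc
    exact ⟨⟨⟨h1, h2⟩, hpos⟩, by omega, by omega⟩

/-- The renewal equation `G = δ + F ⋆ G` for convolution on `ℕ × ℕ` is solved by `∑ᵣ F^{⋆r}`;
in bidegree `(n, k)` only `r ≤ k` contributes. -/
theorem eq_sum_pairCompositions_of_renewal {G : ℕ → ℕ → R}
    (hG : ∀ n k, G n k = (if n = 0 ∧ k = 0 then 1 else 0) +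
      ∑ x ∈ Icc 1 n ×ˢ Icc 1 k, F x * G (n - x.1) (k - x.2)) (n k : ℕ) :
    G n k = ∑ r ∈ range (k + 1), ∑ c ∈ pairCompositions r n k, ∏ i, F (c i) := by
  suffices ∀ N n k, k ≤ N →
      G n k = ∑ r ∈ range (N + 1), ∑ c ∈ pairCompositions r n k, ∏ i, F (c i) from
    this k n k le_rfl
  intro N
  induction N with
  | zero =>
    intro n k hk
    obtain rfl := Nat.le_zero.1 hk
    rw [hG n 0, sum_range_one, sum_pairCompositions_zero]
    simp
  | succ N ih =>
    intro n k hk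
    rw [hG, sum_range_succ', sum_pairCompositions_zero, add_comm]
    congr 1
    simp_rw [sum_pairCompositions_succ]
    rw [sum_comm]
    refine sum_congr rfl fun x hx => ?_
    rw [← mul_sum, ih _ _ (by simp only [mem_product, mem_Icc] at hx; omega)]

end WeightedSum

def prefixSum {k : ℕ} (j : ℕ) (b : Fin k → ℕ) : ℕ :=
  ∑ i ∈ univ.filter (fun i : Fin k => (i : ℕ) < j), b i

section PrefixSum

variable {k j l t : ℕ}

lemma prefixSum_of_le (h : k ≤ j) (b : Fin k → ℕ) : prefixSum j b = ∑ i, b i := by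
  rw [prefixSum, filter_true_of_mem fun i _ => i.isLt.trans_le h]

lemma prefixSum_mono (b : Fin k → ℕ) : Monotone (prefixSum · b) :=
  fun _ _ h => sum_le_sum_of_subset fun i => by simp only [mem_filter, mem_univ, true_and]; omega

lemma prefixSum_pos {b : Fin k → ℕ} (hb : ∀ i, 0 < b i) (hj : 0 < j) (hk : 0 < k) :
    0 < prefixSum j b :=
  sum_pos (fun i _ => hb i) ⟨⟨0, hk⟩, by simpa using hj⟩

lemma prefixSum_append_of_le (a : Fin j → ℕ) (c : Fin l → ℕ) (ht : t ≤ j) :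
    prefixSum t (Fin.append a c) = prefixSum t a := by
  simp only [prefixSum, sum_filter, Fin.sum_univ_add, Fin.append_left, Fin.append_right,
    Fin.val_castAdd, Fin.val_natAdd, add_eq_left]
  exact sum_eq_zero fun i _ => if_neg (by omega)

lemma prefixSum_append_self (a : Fin j → ℕ) (c : Fin l → ℕ) :
    prefixSum j (Fin.append a c) = ∑ i, a i := by
  rw [prefixSum_append_of_le a c le_rfl, prefixSum_of_le le_rfl]

end PrefixSum

lemma isComposition_append_iff {j l m n : ℕ} {a : Fin j → ℕ} {c : Fin l → ℕ}
    (ha : ∑ i, a i = m) (hmn : m ≤ n) :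
    IsComposition n (j + l) (Fin.append a c) ↔ IsComposition m j a ∧ IsComposition (n - m) l c := by
  simp only [IsComposition, Fin.forall_fin_add, Fin.append_left, Fin.append_right,
    Fin.sum_univ_add, ha, and_true, and_assoc]
  exact and_congr_right fun _ => and_congr_right fun _ => by omega

def compositionPairs (n k : ℕ) : Finset ((Fin k → ℕ) × (Fin k → ℕ)) :=
  compositions n k ×ˢ compositions n k

def irreduciblePairs (n k : ℕ) : Finset ((Fin k → ℕ) × (Fin k → ℕ)) :=
  (compositionPairs n k).filter fun p =>
    ∀ j < k, 1 ≤ j → prefixSum j p.1 ≠ prefixSum j p.2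

lemma mem_compositionPairs {n k : ℕ} {p : (Fin k → ℕ) × (Fin k → ℕ)} :
    p ∈ compositionPairs n k ↔ IsComposition n k p.1 ∧ IsComposition n k p.2 := by
  simp [compositionPairs, mem_compositions]

lemma mem_irreduciblePairs {n k : ℕ} {p : (Fin k → ℕ) × (Fin k → ℕ)} :
    p ∈ irreduciblePairs n k ↔ IsIrreduciblePair n k p.1 p.2 := by
  rw [irreduciblePairs, mem_filter, mem_compositionPairs, and_assoc]
  exact and_congr_right' <| and_congr_right' <| forall_congr' fun _ => imp.swap

lemma numIrreduciblePairsK_eq_card (n k : ℕ) :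
    numIrreduciblePairsK n k = #(irreduciblePairs n k) :=
  Nat.subtype_card _ fun _ => mem_irreduciblePairs

noncomputable def firstAgreement {k : ℕ} (p : (Fin k → ℕ) × (Fin k → ℕ)) : ℕ :=
  sInf {j | 1 ≤ j ∧ prefixSum j p.1 = prefixSum j p.2}

lemma firstAgreement_eq_iff {k : ℕ} {p : (Fin k → ℕ) × (Fin k → ℕ)}
    (h : ∃ j, 1 ≤ j ∧ prefixSum j p.1 = prefixSum j p.2) {j : ℕ} :
    firstAgreement p = j ↔ 1 ≤ j ∧ prefixSum j p.1 = prefixSum j p.2 ∧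
      ∀ t, 1 ≤ t → t < j → prefixSum t p.1 ≠ prefixSum t p.2 := by
  constructor
  · rintro rfl
    exact ⟨(Nat.sInf_mem h).1, (Nat.sInf_mem h).2,
      fun t ht hlt heq => Nat.notMem_of_lt_sInf hlt ⟨ht, heq⟩⟩
  · rintro ⟨hj, heq, hne⟩
    exact IsLeast.csInf_eq ⟨⟨hj, heq⟩, fun t ⟨ht, hteq⟩ => not_lt.1 fun hlt => hne t ht hlt hteq⟩

lemma prefixSum_eq_of_mem_compositionPairs {n k : ℕ} {p : (Fin k → ℕ) × (Fin k → ℕ)}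
    (hp : p ∈ compositionPairs n k) : prefixSum k p.1 = prefixSum k p.2 := by
  rw [mem_compositionPairs] at hp
  rw [prefixSum_of_le le_rfl, prefixSum_of_le le_rfl, hp.1.2, hp.2.2]

lemma firstAgreement_mem {n k : ℕ} (hk : 1 ≤ k) {p : (Fin k → ℕ) × (Fin k → ℕ)}
    (hp : p ∈ compositionPairs n k) :
    (prefixSum (firstAgreement p) p.1, firstAgreement p) ∈ Icc 1 n ×ˢ Icc 1 k := by
  have hagree := prefixSum_eq_of_mem_compositionPairs hp
  obtain ⟨hpos, -, -⟩ := (firstAgreement_eq_iff ⟨k, hk, hagree⟩).1 rfl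
  have hle : firstAgreement p ≤ k := Nat.sInf_le ⟨hk, hagree⟩
  rw [mem_compositionPairs] at hp
  refine mem_product.2 ⟨mem_Icc.2 ⟨prefixSum_pos hp.1.1 hpos hk, ?_⟩, mem_Icc.2 ⟨hpos, hle⟩⟩
  calc prefixSum (firstAgreement p) p.1 ≤ prefixSum k p.1 := prefixSum_mono _ hle
    _ = n := by rw [prefixSum_of_le le_rfl, hp.1.2]

/-- `Fin.append` identifies (irreducible pairs of `m` into `j` parts) × (pairs of compositions
of `n - m` into `l` parts) with the pairs whose partial sums first agree at `j`, with value `m`. -/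
lemma card_filter_firstAgreement_eq {n m j l : ℕ} (hj : 1 ≤ j) (hmn : m ≤ n) :
    #((compositionPairs n (j + l)).filter
        fun p => (prefixSum (firstAgreement p) p.1, firstAgreement p) = (m, j)) =
      #(irreduciblePairs m j) * #(compositionPairs (n - m) l) := by
  rw [← card_product]
  symm
  refine card_equiv ((Equiv.prodProdProdComm _ _ _ _).trans
    ((Fin.appendEquiv j l).prodCongr (Fin.appendEquiv j l))) ?_
  rintro ⟨⟨a, a'⟩, c, c'⟩
  have happend (x : Fin j → ℕ) (y : Fin l → ℕ) : Fin.appendEquiv j l (x, y) = Fin.append x y := rfl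
  simp only [Equiv.trans_apply, Equiv.prodProdProdComm_apply, Equiv.prodCongr_apply,
    Prod.map_apply, happend, mem_product, mem_filter, mem_irreduciblePairs, mem_compositionPairs,
    Prod.mk.injEq]
  constructor
  · rintro ⟨⟨ha, ha', hirr⟩, hc, hc'⟩
    have hsum : prefixSum j (Fin.append a c) = prefixSum j (Fin.append a' c') := by
      rw [prefixSum_append_self, prefixSum_append_self, ha.2, ha'.2]
    have hfirst : firstAgreement (Fin.append a c, Fin.append a' c') = j :=
      (firstAgreement_eq_iff ⟨j, hj, hsum⟩).2 ⟨hj, hsum, fun t ht htj => by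
        rw [prefixSum_append_of_le _ _ htj.le, prefixSum_append_of_le _ _ htj.le]
        exact hirr t ht htj⟩
    refine ⟨⟨(isComposition_append_iff ha.2 hmn).2 ⟨ha, hc⟩,
      (isComposition_append_iff ha'.2 hmn).2 ⟨ha', hc'⟩⟩, ?_, hfirst⟩
    rw [hfirst, prefixSum_append_self, ha.2]
  · rintro ⟨⟨hb, hb'⟩, hm, hfirst⟩
    obtain ⟨-, hsum, hmin⟩ := (firstAgreement_eq_iff
      ⟨j + l, by omega, prefixSum_eq_of_mem_compositionPairs
        (mem_compositionPairs.2 ⟨hb, hb'⟩)⟩).1 hfirst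
    rw [hfirst, prefixSum_append_self] at hm
    rw [prefixSum_append_self, prefixSum_append_self, hm] at hsum
    obtain ⟨ha, hc⟩ := (isComposition_append_iff hm hmn).1 hb
    obtain ⟨ha', hc'⟩ := (isComposition_append_iff hsum.symm hmn).1 hb'
    refine ⟨⟨ha, ha', fun t ht htj => ?_⟩, hc, hc'⟩
    have h := hmin t ht htj
    rw [prefixSum_append_of_le a c htj.le, prefixSum_append_of_le a' c' htj.le] at h
    exact h

theorem card_compositionPairs_eq (n k : ℕ) :
    #(compositionPairs n k) = (if n = 0 ∧ k = 0 then 1 else 0) +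
      ∑ x ∈ Icc 1 n ×ˢ Icc 1 k,
        #(irreduciblePairs x.1 x.2) * #(compositionPairs (n - x.1) (k - x.2)) := by
  rcases Nat.eq_zero_or_pos k with rfl | hk
  · rcases eq_or_ne n 0 with rfl | hn
    · simp [compositionPairs, compositions]
    · simp [compositionPairs, compositions, hn, hn.symm]
  rw [if_neg (by omega), zero_add, card_eq_sum_card_fiberwise fun _ => firstAgreement_mem hk]
  refine sum_congr rfl fun ⟨m, j⟩ hx => ?_
  simp only [mem_product, mem_Icc] at hx
  obtain ⟨l, rfl⟩ := Nat.exists_eq_add_of_le hx.2.2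
  rw [card_filter_firstAgreement_eq hx.2.1 hx.1.2, Nat.add_sub_cancel_left]

/-- **Decomposition of pairs of compositions into irreducible pairs**:
for `n, k ≥ 1`,
`C(n-1, k-1)² = ∑_{r≥1} ∑ f(m₁,k₁) ⋯ f(m_r,k_r)`, the inner sum over tuples of
positive integers with `m₁+⋯+m_r = n` and `k₁+⋯+k_r = k` (necessarily
`1 ≤ r ≤ k`). -/
theorem pairs_decompose_into_irreducible (n k : ℕ) (hn : 1 ≤ n) (hk : 1 ≤ k) :
    (Nat.choose (n - 1) (k - 1)) ^ 2 =
      ∑ r ∈ Finset.Icc 1 k,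
        ∑ c ∈ (Fintype.piFinset fun _ : Fin r =>
            Finset.Icc 1 n ×ˢ Finset.Icc 1 k).filter
            (fun c => (∑ i, (c i).1) = n ∧ (∑ i, (c i).2) = k),
          ∏ i, numIrreduciblePairsK (c i).1 (c i).2 := by
  have hpairs := eq_sum_pairCompositions_of_renewal (fun x => numIrreduciblePairsK x.1 x.2)
    (G := fun n k => #(compositionPairs n k))
    (by simpa only [numIrreduciblePairsK_eq_card] using card_compositionPairs_eq) n k
  rw [range_eq_Ico, sum_eq_sum_Ico_succ_bot (by omega : 0 < k + 1),
    sum_pairCompositions_zero (fun x => numIrreduciblePairsK x.1 x.2), if_neg (by omega),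
    zero_add, zero_add, Ico_add_one_right_eq_Icc] at hpairs
  rw [← card_compositions hn hk, sq, ← card_product]
  exact hpairs
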